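/- arXiv:1808.01207 — 2 statements merged into one kernel-verified Lean document; each statement's English description precedes it below -/
import Mathlib

section
/- Let k be a field with char k ≠ 2 and ρ ∈ k. If g ∈ k[z] satisfies g(1+ρ−z) = g(z) (as polynomials), then g lies in the image of the algebra map k[T] → k[z] sending T to z(1+ρ−z); i.e., g is a polynomial in z(1+ρ−z). -/
open Polynomial

/-- If `char k ≠ 2` and `g(1+ρ−z) = g(z)`, then `g` is a polynomial in
`z(1+ρ−z)`. -/
theorem stmt_1 (k : Type*) [Field k] (hchar : (2 : k) ≠ 0) (ρ : k) (g : k[X])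
    (hg : g.comp (C (1 + ρ) - X) = g) :
    ∃ h : k[X], g = h.comp (X * (C (1 + ρ) - X)) := by
  set c : k := 1 + ρ with hc
  suffices H : ∀ n (g : k[X]), g.natDegree ≤ n → g.comp (C c - X) = g →
      ∃ h : k[X], g = h.comp (X * (C c - X)) from H g.natDegree g le_rfl hg
  intro n
  induction n using Nat.strong_induction_on with
  | _ n ih =>
    intro g hdeg hginv
    by_cases hg0 : g = 0
    · exact ⟨0, by simp [hg0]⟩
    by_cases hd0 : g.natDegree = 0
    · exact ⟨C (g.coeff 0), by rw [Polynomial.eq_C_of_natDegree_eq_zero hd0]; simp⟩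
    -- basic facts about `C c - X`
    have hlin : (C c - X : k[X]).natDegree = 1 := by
      have h : (C c - X : k[X]) = -(X - C c) := by ring
      rw [h, Polynomial.natDegree_neg, Polynomial.natDegree_X_sub_C]
    have hlead : (C c - X : k[X]).leadingCoeff = -1 := by
      have h : (C c - X : k[X]) = -(X - C c) := by ring
      rw [h, Polynomial.leadingCoeff_neg, (Polynomial.monic_X_sub_C c).leadingCoeff]
    -- the degree of g is even
    have hleadg : g.leadingCoeff ≠ 0 := Polynomial.leadingCoeff_ne_zero.mpr hg0
    have hpow : ((-1 : k) ^ g.natDegree) = 1 := by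
      have h1 := congrArg Polynomial.leadingCoeff hginv
      rw [Polynomial.leadingCoeff_comp (by rw [hlin]; exact one_ne_zero), hlead] at h1
      exact mul_left_cancel₀ hleadg (h1.trans (mul_one g.leadingCoeff).symm)
    obtain ⟨m, hm⟩ : ∃ m, g.natDegree = 2 * m := by
      rcases Nat.even_or_odd g.natDegree with he | ho
      · obtain ⟨r, hr⟩ := he
        exact ⟨r, by omega⟩
      · rw [ho.neg_one_pow] at hpow
        exact (hchar (show (2 : k) = 0 by linear_combination -hpow)).elim
    set u : k[X] := X * (C c - X) with hu
    have hX0 : (X : k[X]) ≠ 0 := Polynomial.X_ne_zero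
    have hl0 : (C c - X : k[X]) ≠ 0 := fun h => by simp [h] at hlin
    have hu_deg : u.natDegree = 2 := by
      rw [hu, Polynomial.natDegree_mul hX0 hl0, Polynomial.natDegree_X, hlin]
    have hu_lead : u.leadingCoeff = -1 := by
      rw [hu, Polynomial.leadingCoeff_mul, Polynomial.leadingCoeff_X, hlead, one_mul]
    have hu_inv : u.comp (C c - X) = u := by
      rw [hu]
      simp only [Polynomial.mul_comp, Polynomial.X_comp, Polynomial.sub_comp,
        Polynomial.C_comp]
      ring
    set a : k := g.leadingCoeff * (-1) ^ m with ha
    have ha0 : a ≠ 0 := by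
      simp [ha, hleadg]
    set p : k[X] := C a * u ^ m with hp
    have hp0 : p ≠ 0 := by
      simp only [hp, mul_ne_zero_iff, Ne, Polynomial.C_eq_zero]
      exact ⟨ha0, pow_ne_zero m (mul_ne_zero hX0 hl0)⟩
    have hp_deg : p.natDegree = 2 * m := by
      rw [hp, Polynomial.natDegree_C_mul ha0, Polynomial.natDegree_pow, hu_deg, mul_comm]
    have hp_lead : p.leadingCoeff = g.leadingCoeff := by
      rw [hp, Polynomial.leadingCoeff_mul, Polynomial.leadingCoeff_C,
        Polynomial.leadingCoeff_pow, hu_lead, ha]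
      rw [mul_assoc, ← pow_add]
      have : (-1 : k) ^ (m + m) = 1 := by
        rw [← two_mul, pow_mul]; simp
      rw [this, mul_one]
    have hp_inv : p.comp (C c - X) = p := by
      rw [hp]
      simp [Polynomial.mul_comp, Polynomial.pow_comp, hu_inv]
    set q : k[X] := g - p with hq
    have hq_inv : q.comp (C c - X) = q := by
      rw [hq, Polynomial.sub_comp, hginv, hp_inv]
    by_cases hq0 : q = 0
    · refine ⟨C a * X ^ m, ?_⟩
      have : g = p := by rw [← sub_eq_zero]; exact hq0
      rw [this, hp]
      simp [Polynomial.mul_comp, Polynomial.pow_comp]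
    · have hdegq : q.natDegree < g.natDegree := by
        apply Polynomial.natDegree_lt_natDegree hq0
        have hdd : g.degree = p.degree := by
          rw [Polynomial.degree_eq_natDegree hg0, Polynomial.degree_eq_natDegree hp0,
            hp_deg, hm]
        simpa [hq] using Polynomial.degree_sub_lt hdd hg0 hp_lead.symm
      obtain ⟨h', hh'⟩ := ih q.natDegree (lt_of_lt_of_le hdegq hdeg) q le_rfl hq_inv
      refine ⟨C a * X ^ m + h', ?_⟩
      have : g = p + q := by rw [hq]; ring
      rw [this, hh', hp]
      simp [Polynomial.add_comp, Polynomial.mul_comp, Polynomial.pow_comp]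
end

section
/- Let F be a field of characteristic p > 0, σ the F-algebra automorphism of F[z] with σ(z) = z − 1, a ∈ F[z], and R = F[z][x,y;σ,a] the generalized Weyl algebra. Then x^p and y^p are central in R. -/
noncomputable section

variable (D : Type*) [CommRing D]

abbrev GWA.FreeRing := FreeAlgebra ℤ (D ⊕ Bool)

namespace GWA

def emb (d : D) : FreeRing D := FreeAlgebra.ι ℤ (Sum.inl d)
def Xf : FreeRing D := FreeAlgebra.ι ℤ (Sum.inr true)
def Yf : FreeRing D := FreeAlgebra.ι ℤ (Sum.inr false)

variable (σ : RingAut D) (a : D)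

/-- The defining relations of the generalized Weyl algebra `D[x,y;σ,a]`. -/
inductive Rel : FreeRing D → FreeRing D → Prop
  | add_ (d e : D) : Rel (emb D (d + e)) (emb D d + emb D e)
  | mul_ (d e : D) : Rel (emb D (d * e)) (emb D d * emb D e)
  | one_ : Rel (emb D 1) 1
  | xy : Rel (Xf D * Yf D) (emb D (σ a))
  | yx : Rel (Yf D * Xf D) (emb D a)
  | xd (d : D) : Rel (Xf D * emb D d) (emb D (σ d) * Xf D)
  | yd (d : D) : Rel (Yf D * emb D d) (emb D (σ⁻¹ d) * Yf D)

end GWA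

/-- The generalized Weyl algebra `D[x,y;σ,a]`. -/
abbrev GWA (σ : RingAut D) (a : D) := RingQuot (GWA.Rel D σ a)

namespace GWA

variable (σ : RingAut D) (a : D)

def x : GWA D σ a := RingQuot.mkRingHom (Rel D σ a) (Xf D)
def y : GWA D σ a := RingQuot.mkRingHom (Rel D σ a) (Yf D)

end GWA

open Polynomial

/-- If `F` is a field of characteristic `p > 0`, `σ` the `F`-algebra
automorphism of `F[z]` with `σ(z) = z − 1`, and `R = F[z][x,y;σ,a]` the
generalized Weyl algebra, then `x^p` and `y^p` are central in `R`. -/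
theorem stmt_13 (F : Type*) [Field F] (p : ℕ) (hp : p ≠ 0) [CharP F p]
    (σ : RingAut (Polynomial F)) (hσX : σ X = X - 1) (hσC : ∀ c : F, σ (C c) = C c)
    (a : Polynomial F) :
    ∀ r : GWA (Polynomial F) σ a,
      Commute (GWA.x (Polynomial F) σ a ^ p) r ∧
      Commute (GWA.y (Polynomial F) σ a ^ p) r := by
  set π : GWA.FreeRing (Polynomial F) →+* GWA (Polynomial F) σ a :=
      RingQuot.mkRingHom (GWA.Rel (Polynomial F) σ a) with hπ
  set e : Polynomial F → GWA (Polynomial F) σ a := fun d => π (GWA.emb (Polynomial F) d) with he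
  set x : GWA (Polynomial F) σ a := GWA.x (Polynomial F) σ a with hx
  set y : GWA (Polynomial F) σ a := GWA.y (Polynomial F) σ a with hy
  have hxπ : x = π (GWA.Xf (Polynomial F)) := rfl
  have hyπ : y = π (GWA.Yf (Polynomial F)) := rfl
  -- σ ^ p = 1
  have hpow : ∀ (k : ℕ) (d : Polynomial F), (σ ^ (k+1)) d = σ ((σ ^ k) d) := by
    intro k d; rw [pow_succ']; rfl
  have hpow2 : ∀ (k : ℕ) (d : Polynomial F), (σ ^ (k+1)) d = (σ ^ k) (σ d) := by
    intro k d; rw [pow_succ]; rfl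
  have hσkC : ∀ (k : ℕ) (c : F), (σ ^ k) (C c) = C c := by
    intro k
    induction k with
    | zero => intro c; rfl
    | succ n ih => intro c; rw [hpow, ih, hσC]
  have hσkX : ∀ (k : ℕ), (σ ^ k) X = X - (k : Polynomial F) := by
    intro k
    induction k with
    | zero => rw [pow_zero]; simp
    | succ n ih =>
      rw [hpow, ih, map_sub, hσX, map_natCast]
      push_cast
      ring
  have hpz : ((p : ℕ) : Polynomial F) = 0 := by
    rw [← map_natCast (C : F →+* Polynomial F) p, CharP.cast_eq_zero F p, map_zero]
  have hext : ((σ ^ p : RingAut (Polynomial F)) : Polynomial F →+* Polynomial F)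
      = RingHom.id (Polynomial F) := by
    refine Polynomial.ringHom_ext (fun c => ?_) ?_
    · exact hσkC p c
    · show (σ ^ p) X = X
      rw [hσkX p, hpz, sub_zero]
  have hσp : ∀ d : Polynomial F, (σ ^ p) d = d := fun d => DFunLike.congr_fun hext d
  have hσp1 : σ ^ p = 1 := RingEquiv.ext hσp
  have hσip : ∀ d : Polynomial F, ((σ⁻¹) ^ p) d = d := by
    rw [inv_pow, hσp1, inv_one]; intro d; rfl
  -- relations in the quotient
  have hxy : x * y = e (σ a) := by
    rw [hxπ, hyπ, ← map_mul]
    exact RingQuot.mkRingHom_rel GWA.Rel.xy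
  have hyx : y * x = e a := by
    rw [hxπ, hyπ, ← map_mul]
    exact RingQuot.mkRingHom_rel GWA.Rel.yx
  have hxd : ∀ d : Polynomial F, x * e d = e (σ d) * x := by
    intro d
    rw [hxπ, he]; dsimp only
    rw [← map_mul, ← map_mul]
    exact RingQuot.mkRingHom_rel (GWA.Rel.xd d)
  have hyd : ∀ d : Polynomial F, y * e d = e (σ⁻¹ d) * y := by
    intro d
    rw [hyπ, he]; dsimp only
    rw [← map_mul, ← map_mul]
    exact RingQuot.mkRingHom_rel (GWA.Rel.yd d)
  -- iterated commutation relations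
  have hxkd : ∀ (k : ℕ) (d : Polynomial F), x ^ k * e d = e ((σ ^ k) d) * x ^ k := by
    intro k
    induction k with
    | zero => intro d; rw [pow_zero, one_mul, mul_one]; rfl
    | succ n ih =>
      intro d
      rw [pow_succ' x n, mul_assoc, ih, ← mul_assoc, hxd, hpow, mul_assoc]
  have hykd : ∀ (k : ℕ) (d : Polynomial F), y ^ k * e d = e ((σ⁻¹ ^ k) d) * y ^ k := by
    intro k
    induction k with
    | zero => intro d; rw [pow_zero, one_mul, mul_one]; rfl
    | succ n ih =>
      intro d
      have h1 : (σ⁻¹ ^ (n+1)) d = σ⁻¹ ((σ⁻¹ ^ n) d) := by rw [pow_succ']; rfl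
      rw [pow_succ' y n, mul_assoc, ih, ← mul_assoc, hyd, h1, mul_assoc]
  obtain ⟨q, hq⟩ : ∃ q, p = q + 1 :=
    ⟨p - 1, (Nat.succ_pred_eq_of_pos (Nat.pos_of_ne_zero hp)).symm⟩
  -- commutation of x^p with generators
  have hxpd : ∀ d : Polynomial F, Commute (x ^ p) (e d) := by
    intro d
    show x ^ p * e d = e d * x ^ p
    rw [hxkd p d, hσp]
  have hxpy : Commute (x ^ p) y := by
    show x ^ p * y = y * x ^ p
    have hqa : (σ ^ q) (σ a) = a := by rw [← hpow2, ← hq, hσp]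
    have h1 : x ^ p * y = e a * x ^ q := by
      rw [hq, pow_succ, mul_assoc, hxy, hxkd q (σ a), hqa]
    have h2 : y * x ^ p = e a * x ^ q := by
      rw [hq, pow_succ', ← mul_assoc, hyx]
    rw [h1, h2]
  have hσinvq : (σ⁻¹ ^ q) a = σ a := by
    have h1 : σ ^ q = σ⁻¹ := by
      have h2 := hσp1
      rw [hq, pow_succ] at h2
      calc σ ^ q = σ ^ q * σ * σ⁻¹ := by group
        _ = σ⁻¹ := by rw [h2, one_mul]
    rw [inv_pow, h1, inv_inv]
  have hypd : ∀ d : Polynomial F, Commute (y ^ p) (e d) := by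
    intro d
    show y ^ p * e d = e d * y ^ p
    rw [hykd p d, hσip]
  have hypx : Commute (y ^ p) x := by
    show y ^ p * x = x * y ^ p
    have h1 : y ^ p * x = e (σ a) * y ^ q := by
      rw [hq, pow_succ, mul_assoc, hyx, hykd q a, hσinvq]
    have h2 : x * y ^ p = e (σ a) * y ^ q := by
      rw [hq, pow_succ', ← mul_assoc, hxy]
    rw [h1, h2]
  -- centrality by induction over the free algebra
  have key : ∀ f : GWA.FreeRing (Polynomial F),
      Commute (x ^ p) (π f) ∧ Commute (y ^ p) (π f) := by
    intro f
    induction f using FreeAlgebra.induction with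
    | grade0 n =>
      constructor <;>
      · rw [show (algebraMap ℤ (GWA.FreeRing (Polynomial F))) n
            = ((n : ℤ) : GWA.FreeRing (Polynomial F)) from rfl, map_intCast]
        exact (Int.cast_commute n _).symm
    | grade1 i =>
      rcases i with d | b
      · exact ⟨hxpd d, hypd d⟩
      · cases b
        · exact ⟨hxpy, Commute.pow_left rfl p⟩
        · exact ⟨Commute.pow_left rfl p, hypx⟩
    | mul f g hf hg =>
      rw [map_mul]
      exact ⟨hf.1.mul_right hg.1, hf.2.mul_right hg.2⟩
    | add f g hf hg =>
      rw [map_add]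
      exact ⟨hf.1.add_right hg.1, hf.2.add_right hg.2⟩
  intro r
  obtain ⟨f, rfl⟩ := RingQuot.mkRingHom_surjective (GWA.Rel (Polynomial F) σ a) r
  exact key f
end
end
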